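/- arXiv:1111.2888 — 2 statements merged into one kernel-verified Lean document; each statement's English description precedes it below -/
import Mathlib

section
/- For every n ≥ 1 there exists a binary sequence s₀,…,s_{2^m−1} (a De Bruijn sequence with n = 2^m) such that the walk on the set of m-bit strings defined by shifting in s_i at step i visits every m-bit string exactly once per period, i.e., the map i ↦ (s_{i−1 mod n},…,s_{i−m mod n}) is a bijection from {0,…,n−1} to {0,1}^m. -/
/-!
A de Bruijn sequence of order `m` is the same thing as a Hamiltonian cycle in the de Bruijn
graph on words of length `m`: read off the newest symbol of each word along the cycle.
A successor permutation (a cover of the graph by disjoint cycles) exists, namely rotation of the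
word. Two words that agree in their `m - 1` newest symbols have the same successors, so swapping
their images keeps a successor permutation, and when the two words lie on different cycles the
swap merges these cycles. Since the graph is strongly connected, the cycle through a fixed base
point admits such a swap with the outside until it covers everything; hence a successor
permutation maximising that cycle is a single cycle.
-/

open Function Equiv.Perm

namespace Equiv.Perm

variable {α : Type*} {r : α → α → Prop}

theorem sameCycle_mul_swap_of_pow_apply_eq [DecidableEq α] {π : Perm α} {a b : α}
    (hab : ¬ π.SameCycle a b) (n : ℕ) {x : α} (hx : (π ^ n) x = a) :
    (π * swap a b).SameCycle x a := by
  induction n generalizing x with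
  | zero => exact (hx : x = a) ▸ SameCycle.refl _ _
  | succ n ih =>
    by_cases hxa : x = a
    · exact hxa ▸ SameCycle.refl _ _
    have hxb : x ≠ b := by
      rintro rfl
      exact hab (SameCycle.symm ⟨(n + 1 : ℕ), by rwa [zpow_natCast]⟩)
    have hσx : (π * swap a b) x = π x := by simp [swap_apply_of_ne_of_ne hxa hxb]
    rw [← sameCycle_apply_left, hσx]
    exact ih (by rwa [← Perm.mul_apply, ← pow_succ])

theorem ncard_setOf_sameCycle_lt_mul_swap [Finite α] [DecidableEq α] {π : Perm α}
    {x₀ a b : α} (ha : π.SameCycle x₀ a) (hb : ¬ π.SameCycle x₀ b) :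
    {x | π.SameCycle x₀ x}.ncard < {x | (π * swap a b).SameCycle x₀ x}.ncard := by
  have hab : ¬ π.SameCycle a b := fun h => hb (ha.trans h)
  have merged : ∀ x, π.SameCycle x a → (π * swap a b).SameCycle x a := fun x hx =>
    have ⟨n, hn⟩ := hx.exists_nat_pow_eq
    sameCycle_mul_swap_of_pow_apply_eq hab n hn
  refine Set.ncard_lt_ncard (Set.ssubset_iff_insert.2 ⟨b, hb, Set.insert_subset_iff.2 ⟨?_, ?_⟩⟩)
  · have hσb : (π * swap a b) b = π a := by simp
    refine (merged x₀ ha).trans (SameCycle.symm ?_)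
    rw [← sameCycle_apply_left, hσb]
    exact merged _ (sameCycle_apply_left.2 .rfl)
  · exact fun x hx => (merged x₀ ha).trans (merged x (SameCycle.symm hx |>.trans ha)).symm

theorem exists_sameCycle_not_sameCycle_of_forall_reflTransGen
    (hconn : ∀ x y, Relation.ReflTransGen r x y) {π : Perm α} (hπ : ∀ x, r x (π x))
    {x₀ y : α} (hy : ¬ π.SameCycle x₀ y) :
    ∃ a b c, π.SameCycle x₀ a ∧ ¬ π.SameCycle x₀ b ∧ r a c ∧ r b c := by
  by_contra! hclosed
  refine hy ?_
  clear hy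
  induction hconn x₀ y with
  | refl => exact .rfl
  | @tail z w _ hzw hz =>
    have hw : r (π.symm w) w := by simpa using hπ (π.symm w)
    have hu : π.SameCycle x₀ (π.symm w) := by_contra fun hu => hclosed _ _ _ hz hu hzw hw
    exact sameCycle_symm_apply_right.1 hu

/-- The rectangle condition says that `r` is the adjacency of a line digraph, and a permutation
`π` with `r x (π x)` is a cover by disjoint cycles; the conclusion is a Hamiltonian cycle. -/
theorem exists_forall_sameCycle_of_rectangular [Finite α] [Nonempty α]
    (hrect : ∀ a b c d, r a c → r b c → r b d → r a d)
    (hconn : ∀ x y, Relation.ReflTransGen r x y) {π₀ : Perm α} (hπ₀ : ∀ x, r x (π₀ x)) :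
    ∃ π : Perm α, (∀ x, r x (π x)) ∧ ∀ x y, π.SameCycle x y := by
  classical
  obtain ⟨x₀⟩ := ‹Nonempty α›
  obtain ⟨π, hπ, hmax⟩ := Set.exists_max_image {π : Perm α | ∀ x, r x (π x)}
    (fun π => {x | π.SameCycle x₀ x}.ncard) (Set.toFinite _) ⟨π₀, hπ₀⟩
  suffices hx₀ : ∀ y, π.SameCycle x₀ y from ⟨π, hπ, fun x y => (hx₀ x).symm.trans (hx₀ y)⟩
  by_contra! ⟨y, hy⟩
  obtain ⟨a, b, c, ha, hb, hac, hbc⟩ :=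
    exists_sameCycle_not_sameCycle_of_forall_reflTransGen hconn hπ hy
  have hσ : ∀ x, r x ((π * swap a b) x) := by
    intro x
    rw [Perm.mul_apply, swap_apply_def]
    split_ifs with hxa hxb
    · exact hxa ▸ hrect a b c _ hac hbc (hπ b)
    · exact hxb ▸ hrect b a c _ hbc hac (hπ a)
    · exact hπ x
  exact (hmax _ hσ).not_gt (ncard_setOf_sameCycle_lt_mul_swap ha hb)

theorem exists_bijective_zmod_of_forall_sameCycle [Fintype α] [Nonempty α] {π : Perm α}
    (h : ∀ x y, π.SameCycle x y) :
    ∃ e : ZMod (Fintype.card α) → α, Bijective e ∧ ∀ i, e (i + 1) = π (e i) := by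
  obtain ⟨x₀⟩ := ‹Nonempty α›
  have hcyc : π.IsCycleOn (Finset.univ : Finset α) := by
    refine ⟨?_, fun x _ y _ => h x y⟩
    simpa only [Finset.coe_univ] using Set.bijOn_univ.2 π.bijective
  have hiter {k l : ℕ} : (π ^ k) x₀ = (π ^ l) x₀ ↔ (k : ZMod (Fintype.card α)) = l := by
    rw [hcyc.pow_apply_eq_pow_apply (Finset.mem_univ x₀), ZMod.natCast_eq_natCast_iff,
      Finset.card_univ]
  have : NeZero (Fintype.card α) := ⟨Fintype.card_ne_zero⟩
  refine ⟨fun i => (π ^ i.val) x₀, ?_, fun i => ?_⟩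
  · refine (Fintype.bijective_iff_injective_and_card _).2 ⟨fun i j hij => ?_, ZMod.card _⟩
    simpa using hiter.1 hij
  · rw [← Perm.mul_apply, ← pow_succ', hiter]
    simp

end Equiv.Perm

namespace DeBruijn

variable {β : Type*} {m : ℕ}

/-- The newest symbol sits in position `0`, matching the window `(s (i-1), …, s (i-m))`. -/
def Adj (x y : Fin m → β) : Prop :=
  ∀ (k : ℕ) (hk : k + 1 < m), y ⟨k + 1, hk⟩ = x ⟨k, by omega⟩

theorem Adj.rectangular {a b c d : Fin m → β} (hac : Adj a c) (hbc : Adj b c)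
    (hbd : Adj b d) : Adj a d :=
  fun k hk => by rw [hbd k hk, ← hbc k hk, hac k hk]

theorem adj_arrowCongr_finRotate (x : Fin m → β) :
    Adj x ((finRotate m).arrowCongr (Equiv.refl β) x) := by
  intro k hk
  obtain ⟨n, rfl⟩ : ∃ n, m = n + 1 := ⟨m - 1, by omega⟩
  exact congrArg x ((Equiv.symm_apply_eq _).2 (finRotate_of_lt (Nat.lt_of_succ_lt_succ hk)).symm)

theorem reflTransGen_adj (x y : Fin m → β) : Relation.ReflTransGen Adj x y := by
  -- `w t` is `x` after shifting in the `t` oldest symbols of `y`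
  let w (t : ℕ) : Fin m → β := fun j =>
    if h : (j : ℕ) < t then y ⟨j + m - t, by omega⟩ else x ⟨j - t, by omega⟩
  have hw : ∀ t ≤ m, Relation.ReflTransGen Adj x (w t) := by
    intro t
    induction t with
    | zero => intro _; convert Relation.ReflTransGen.refl; simp [w]
    | succ t ih =>
      intro ht
      refine (ih (by omega)).tail fun k hk => ?_
      by_cases hkt : k < t
      · simp [w, hkt, show k + 1 + m - (t + 1) = k + m - t by omega]
      · simp [w, hkt, show k + 1 - (t + 1) = k - t by omega]
  convert hw m le_rfl
  ext j
  simp [w]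

theorem exists_seq_of_forall_adj [Nonempty β] {R : Type*} [AddCommGroupWithOne R]
    (e : R → Fin m → β) (he : ∀ i, Adj (e i) (e (i + 1))) :
    ∃ s : R → β, ∀ i (j : Fin m), e i j = s (i - 1 - j) := by
  obtain rfl | hm := m.eq_zero_or_pos
  · exact ⟨fun _ => Classical.arbitrary β, fun _ j => j.elim0⟩
  have hshift : ∀ (k : ℕ) (hk : k < m) i, e i ⟨k, hk⟩ = e (i - k) ⟨0, hm⟩ := by
    intro k
    induction k with
    | zero => simp
    | succ k ih =>
      intro hk i
      have := he (i - 1) k hk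
      rw [sub_add_cancel] at this
      rw [this, ih, sub_sub, add_comm (1 : R), ← Nat.cast_succ]
  exact ⟨fun k => e (k + 1) ⟨0, hm⟩, fun i j =>
    (hshift j j.isLt i).trans (congrArg (e · ⟨0, hm⟩) (by abel))⟩

end DeBruijn

/-- for every `m` there is a binary De Bruijn sequence of order
`m`, i.e. a cyclic binary sequence `s` of length `n = 2^m` (indexed by
`ZMod (2^m)`) such that the map `i ↦ (s_{i-1}, …, s_{i-m})` is a bijection onto
the set of `m`-bit strings: the walk on `{0,1}^m` obtained by shifting in `s_i`
at step `i` visits every `m`-bit string exactly once per period. -/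
theorem deBruijn_exists (m : ℕ) :
    ∃ s : ZMod (2 ^ m) → Bool,
      Function.Bijective
        (fun i : ZMod (2 ^ m) => fun j : Fin m => s (i - 1 - (j : ZMod (2 ^ m)))) := by
  obtain ⟨π, hπ, hcyc⟩ := exists_forall_sameCycle_of_rectangular (r := DeBruijn.Adj)
    (fun _ _ _ _ => DeBruijn.Adj.rectangular) DeBruijn.reflTransGen_adj
    (π₀ := (finRotate m).arrowCongr (Equiv.refl Bool)) DeBruijn.adj_arrowCongr_finRotate
  have hcycle := exists_bijective_zmod_of_forall_sameCycle hcyc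
  rw [show Fintype.card (Fin m → Bool) = 2 ^ m by simp] at hcycle
  obtain ⟨e, he, hstep⟩ := hcycle
  obtain ⟨s, hs⟩ := DeBruijn.exists_seq_of_forall_adj e fun i => hstep i ▸ hπ (e i)
  exact ⟨s, by convert he using 1; funext i j; exact (hs i j).symm⟩
end

section
/- In the hardness-reduction game G associated with a 3-CNF formula φ with n−1 variables and ℓ clauses, if there is a variable assignment satisfying at least (1−β)·ℓ clauses, then there exists a fixed defender strategy f (a function from states to actions) whose expected average per-round payoff against the randomized oblivious adversary A_R satisfies E_R[avg-payoff(f, A_R, G, n)] ≥ (1−β)/n. -/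
/-- States of the hardness-reduction game: the last `m` outcomes `Õ`
(a bit string, encoding the current variable) together with the flag `Ô`
recording whether a reward was just received. -/
abbrev GState (m : ℕ) := (Fin m → Bool) × Bool

abbrev DefAct := Fin 3

abbrev AdvAct := Bool × Fin 4

/-- Transition: the new outcome `Õ` is the first component of the adversary's
action, and `Ô = 1` iff the defender played `2` or matched the adversary's
second component. -/
def step {m : ℕ} (σ : GState m) (d : DefAct) (a : AdvAct) : GState m :=
  (fun j => if h : j.val = 0 then a.1 else σ.1 ⟨j.val - 1, by have := j.isLt; omega⟩,
   decide (d = 2 ∨ d.val = a.2.val))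

/-- Payoff: `−1` if `Ô = 1`, the defender plays `d ≠ 2` and the adversary's
second component is not the reset action `3`; `+1` if `Ô = 0` and the defender
matches the adversary's second component with `d ≠ 2`; `0` otherwise. -/
def pay {m : ℕ} (σ : GState m) (d : DefAct) (a : AdvAct) : ℝ :=
  if σ.2 = true ∧ d ≠ 2 ∧ a.2 ≠ 3 then -1
  else if d ≠ 2 ∧ d.val = a.2.val ∧ σ.2 = false then 1
  else 0

/-- State trajectory when the defender plays the fixed strategy `f`. -/
def states {m : ℕ} (f : GState m → DefAct) (adv : ℕ → AdvAct) (σ0 : GState m) :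
    ℕ → GState m
  | 0 => σ0
  | t + 1 => step (states f adv σ0 t) (f (states f adv σ0 t)) (adv t)

/-- Total payoff of the fixed strategy `f` over `T` rounds. -/
def totalPay {m : ℕ} (f : GState m → DefAct) (adv : ℕ → AdvAct) (σ0 : GState m)
    (T : ℕ) : ℝ :=
  ∑ t ∈ Finset.range T, pay (states f adv σ0 t) (f (states f adv σ0 t)) (adv t)

/-- The oblivious adversary for a chosen clause `c` (a clause is a partial
assignment: `c i = some b` means the literal on variable `x_i` with polarity
`b` occurs in `c`): it plays the De Bruijn bit `s_i` in the first component,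
and in the second component the reset action `3` at the start of the phase,
`1` if `x_i ∈ c`, `0` if `¬x_i ∈ c`, and `2` otherwise. -/
def advAction (m : ℕ) (s : ℕ → Bool) (c : Fin (2 ^ m) → Option Bool) (t : ℕ) :
    AdvAct :=
  (s (t % 2 ^ m),
   if t % 2 ^ m = 0 then 3
   else
     match c ⟨t % 2 ^ m, Nat.mod_lt _ (by positivity)⟩ with
     | some true => 1
     | some false => 0
     | none => 2)

/-- Initial state: as if the De Bruijn sequence had been played forever. -/
def initState (m : ℕ) (s : ℕ → Bool) : GState m :=
  (fun j => s ((2 ^ m - 1 - j.val) % 2 ^ m), false)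


/-!
The defender plays, while the flag `Ô` is unset, the value under `v` of the variable visited in
the current round (by the De Bruijn property the state determines it), and the safe action `2`
once `Ô` is set. Against the adversary of a clause `c` it is then rewarded exactly at the first
literal of `c` made true by `v` and never penalised, so its payoff over a phase is `1` if `v`
satisfies `c` and `0` otherwise. Averaging over the clauses gives the bound.
-/

theorem Finset.sum_range_ite_first {R : Type*} [AddCommMonoidWithOne R] (p : ℕ → Prop)
    [DecidablePred p] (N : ℕ) :
    ∑ t ∈ Finset.range N, (if ¬(∃ u < t, p u) ∧ p t then (1 : R) else 0) =
      if ∃ t < N, p t then 1 else 0 := by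
  induction N with
  | zero => simp
  | succ N ih =>
    simp only [Finset.sum_range_succ, ih, Nat.exists_lt_succ_right]
    by_cases hN : ∃ t < N, p t <;> simp [hN]

section Game

variable {m : ℕ}

theorem pay_safe (σ : GState m) (a : AdvAct) : pay σ 2 a = 0 := by
  simp [pay]

theorem step_safe_snd (σ : GState m) (a : AdvAct) : (step σ 2 a).2 = true := by
  simp [step]

theorem pay_unrewarded {d : DefAct} (hd : d ≠ 2) (w : Fin m → Bool) (a : AdvAct) :
    pay (w, false) d a = if d.val = a.2.val then 1 else 0 := by
  simp [pay, hd]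

theorem step_snd {d : DefAct} (hd : d ≠ 2) (σ : GState m) (a : AdvAct) :
    (step σ d a).2 = decide (d.val = a.2.val) := by
  simp [step, hd]

end Game

/-- The outcome component `Õ` of the state in round `i` of a phase: the last `m` bits of `s`,
read cyclically. -/
def window (m : ℕ) (s : ℕ → Bool) (i : ℕ) : Fin m → Bool :=
  fun j => s ((i + 2 ^ m - 1 - j.val) % 2 ^ m)

theorem initState_eq_window (m : ℕ) (s : ℕ → Bool) : initState m s = (window m s 0, false) := by
  unfold initState window
  simp

theorem step_window_fst {m : ℕ} (s : ℕ → Bool) (t : ℕ) (b : Bool) (d : DefAct) {a : AdvAct}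
    (ha : a.1 = s (t % 2 ^ m)) :
    (step (window m s t, b) d a).1 = window m s (t + 1) := by
  have hm : m < 2 ^ m := Nat.lt_two_pow_self
  funext j
  by_cases hj : j.val = 0
  · simp [step, window, hj, ha]
  · have h : t + 2 ^ m - 1 - (j.val - 1) = t + 1 + 2 ^ m - 1 - j.val := by omega
    simp [step, window, hj, h]

def literalAction (b : Bool) : DefAct := if b then 1 else 0

theorem literalAction_ne_two (b : Bool) : literalAction b ≠ 2 := by
  cases b <;> decide

def SatisfiedAt {m : ℕ} (c : Fin (2 ^ m) → Option Bool) (v : Fin (2 ^ m) → Bool) (t : ℕ) :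
    Prop :=
  ∃ h : t < 2 ^ m, c ⟨t, h⟩ = some (v ⟨t, h⟩)

instance {m : ℕ} (c : Fin (2 ^ m) → Option Bool) (v : Fin (2 ^ m) → Bool) :
    DecidablePred (SatisfiedAt c v) :=
  fun _ => inferInstanceAs (Decidable (∃ _, _))

open Classical in
noncomputable def assignmentStrategy (m : ℕ) (s : ℕ → Bool) (v : Fin (2 ^ m) → Bool)
    (σ : GState m) : DefAct :=
  if σ.2 then 2
  else if h : ∃ i : Fin (2 ^ m), window m s i = σ.1 then literalAction (v h.choose) else 0

section Strategy

variable {m : ℕ} {s : ℕ → Bool} {c : Fin (2 ^ m) → Option Bool} (v : Fin (2 ^ m) → Bool)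

theorem literalAction_val_eq_advAction_iff (hc0 : c ⟨0, by positivity⟩ = none) {t : ℕ}
    (ht : t < 2 ^ m) :
    (literalAction (v ⟨t, ht⟩)).val = (advAction m s c t).2.val ↔ SatisfiedAt c v t := by
  rcases Nat.eq_zero_or_pos t with rfl | ht0
  · simp only [SatisfiedAt, hc0]
    cases v ⟨0, ht⟩ <;> simp [literalAction, advAction]
  · simp only [SatisfiedAt, ht, exists_true_left, advAction, Nat.mod_eq_of_lt ht, ht0.ne',
      if_false]
    cases v ⟨t, ht⟩ <;> rcases c ⟨t, ht⟩ with _ | _ | _ <;> simp [literalAction]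

theorem assignmentStrategy_window_false
    (hDB : Function.Injective fun i : Fin (2 ^ m) => window m s i) {t : ℕ} (ht : t < 2 ^ m) :
    assignmentStrategy m s v (window m s t, false) = literalAction (v ⟨t, ht⟩) := by
  have hex : ∃ i : Fin (2 ^ m), window m s i = window m s t := ⟨⟨t, ht⟩, rfl⟩
  simp only [assignmentStrategy, Bool.false_eq_true, if_false, dif_pos hex]
  rw [show hex.choose = ⟨t, ht⟩ from hDB hex.choose_spec]

theorem states_assignmentStrategy
    (hDB : Function.Injective fun i : Fin (2 ^ m) => window m s i)
    (hc0 : c ⟨0, by positivity⟩ = none) {t : ℕ} (ht : t ≤ 2 ^ m) :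
    states (assignmentStrategy m s v) (advAction m s c) (initState m s) t =
      (window m s t, decide (∃ u < t, SatisfiedAt c v u)) := by
  induction t with
  | zero => simp [states, initState_eq_window]
  | succ t ih =>
    have ht' : t < 2 ^ m := by omega
    rw [states, ih ht'.le]
    refine Prod.ext (step_window_fst s t _ _ rfl) ?_
    simp only [Nat.exists_lt_succ_right]
    by_cases hprev : ∃ u < t, SatisfiedAt c v u
    · simp [hprev, assignmentStrategy, step_safe_snd]
    · simp only [hprev, decide_false, assignmentStrategy_window_false v hDB ht',
        step_snd (literalAction_ne_two _), literalAction_val_eq_advAction_iff v hc0 ht',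
        false_or]

theorem pay_assignmentStrategy
    (hDB : Function.Injective fun i : Fin (2 ^ m) => window m s i)
    (hc0 : c ⟨0, by positivity⟩ = none) {t : ℕ} (ht : t < 2 ^ m) :
    let σ := states (assignmentStrategy m s v) (advAction m s c) (initState m s) t
    pay σ (assignmentStrategy m s v σ) (advAction m s c t) =
      if ¬(∃ u < t, SatisfiedAt c v u) ∧ SatisfiedAt c v t then 1 else 0 := by
  rw [states_assignmentStrategy v hDB hc0 ht.le]
  by_cases hprev : ∃ u < t, SatisfiedAt c v u
  · simp [hprev, assignmentStrategy, pay_safe]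
  · simp only [hprev, decide_false, not_false_eq_true, true_and,
      assignmentStrategy_window_false v hDB ht, pay_unrewarded (literalAction_ne_two _),
      literalAction_val_eq_advAction_iff v hc0 ht]

theorem totalPay_assignmentStrategy
    (hDB : Function.Injective fun i : Fin (2 ^ m) => window m s i)
    (hc0 : c ⟨0, by positivity⟩ = none) :
    totalPay (assignmentStrategy m s v) (advAction m s c) (initState m s) (2 ^ m) =
      if ∃ i, c i = some (v i) then 1 else 0 := by
  have hsat : (∃ t < 2 ^ m, SatisfiedAt c v t) ↔ ∃ i, c i = some (v i) :=
    ⟨fun ⟨_, _, _, hc⟩ => ⟨_, hc⟩, fun ⟨i, hi⟩ => ⟨i, i.isLt, i.isLt, hi⟩⟩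
  rw [totalPay, Finset.sum_congr rfl fun t ht =>
      pay_assignmentStrategy v hDB hc0 (Finset.mem_range.mp ht),
    Finset.sum_range_ite_first]
  exact if_congr hsat rfl rfl

end Strategy

/-- if some assignment `v` satisfies at least `(1−β)ℓ` of the `ℓ`
clauses, then there is a fixed defender strategy whose expected (over the
uniformly random clause choice) average per-round payoff over one phase of
`n = 2^m` rounds against the oblivious adversary is at least `(1−β)/n`.
`hDB` states that `s` is a De Bruijn sequence (distinct variables correspond to
distinct states) and `hvar0` that the variable visited at the phase-start
position occurs in no clause. -/
theorem fixed_strategy_payoff (m ℓ : ℕ) (hℓ : 0 < ℓ) (β : ℝ)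
    (s : ℕ → Bool)
    (hDB : Function.Injective fun i : Fin (2 ^ m) =>
      fun j : Fin m => s ((i.val + 2 ^ m - 1 - j.val) % 2 ^ m))
    (C : Fin ℓ → Fin (2 ^ m) → Option Bool)
    (hvar0 : ∀ jc, C jc ⟨0, by positivity⟩ = none)
    (v : Fin (2 ^ m) → Bool)
    (hsat : (1 - β) * ℓ ≤
      ((Finset.univ.filter fun jc : Fin ℓ => ∃ i, C jc i = some (v i)).card : ℝ)) :
    ∃ f : GState m → DefAct,
      (1 - β) / (2 ^ m : ℝ) ≤
        ((∑ jc : Fin ℓ, totalPay f (advAction m s (C jc)) (initState m s) (2 ^ m)) / ℓ)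
          / (2 ^ m : ℝ) := by
  refine ⟨assignmentStrategy m s v, ?_⟩
  have hsum : ∑ jc : Fin ℓ, totalPay (assignmentStrategy m s v) (advAction m s (C jc))
      (initState m s) (2 ^ m) =
      ((Finset.univ.filter fun jc : Fin ℓ => ∃ i, C jc i = some (v i)).card : ℝ) := by
    rw [← Finset.sum_boole]
    exact Finset.sum_congr rfl fun jc _ => totalPay_assignmentStrategy v hDB (hvar0 jc)
  have hℓ' : (0 : ℝ) < ℓ := Nat.cast_pos.mpr hℓ
  rw [hsum]
  gcongr
  rwa [le_div_iff₀ hℓ']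
end
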